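/- arXiv:1809.05320 — 3 statements merged into one kernel-verified Lean document; each statement's English description precedes it below -/
import Mathlib

section
/- Let $G_8$ be the graph obtained by merging a vertex of two 4-cycles. Then $G_8$ admits no $\Theta$-graceful labeling; concretely, there is no bijection $f$ from the vertices $\{v_1,\dots,v_7\}$ of $G_8$ onto $\{0,1,\dots,6\}$ such that, writing $f_i = f(v_i)$, one has $|f_1-f_2| = |f_3-f_7|$, $|f_1-f_7| = |f_2-f_3|$, $|f_3-f_4| = |f_5-f_6|$, $|f_3-f_6| = |f_4-f_5|$, and the four values $|f_1-f_2|, |f_1-f_7|, |f_3-f_4|, |f_3-f_6|$ are pairwise distinct. -/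
/-- The label of vertex `i` (0-indexed: vertex `vᵢ₊₁` of the paper) as an integer. -/
def lab (f : Fin 7 → Fin 7) (i : Fin 7) : ℤ := ((f i : ℕ) : ℤ)

/-- `f` is a Θ-graceful labeling of the graph `G₈` (two 4-cycles `v₁v₂v₃v₇` and
`v₃v₄v₅v₆` glued at `v₃`; vertex `vᵢ` is index `i-1`): `f` is a bijection onto
`{0,…,6}`, both edges of each of the four Θ-classes get the same edge label, and
the four Θ-class labels are pairwise distinct. -/
def G8Graceful (f : Fin 7 → Fin 7) : Prop :=
  Function.Bijective f ∧
  |lab f 0 - lab f 1| = |lab f 2 - lab f 6| ∧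
  |lab f 0 - lab f 6| = |lab f 1 - lab f 2| ∧
  |lab f 2 - lab f 3| = |lab f 4 - lab f 5| ∧
  |lab f 2 - lab f 5| = |lab f 3 - lab f 4| ∧
  |lab f 0 - lab f 1| ≠ |lab f 0 - lab f 6| ∧
  |lab f 0 - lab f 1| ≠ |lab f 2 - lab f 3| ∧
  |lab f 0 - lab f 1| ≠ |lab f 2 - lab f 5| ∧
  |lab f 0 - lab f 6| ≠ |lab f 2 - lab f 3| ∧
  |lab f 0 - lab f 6| ≠ |lab f 2 - lab f 5| ∧
  |lab f 2 - lab f 3| ≠ |lab f 2 - lab f 5|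

/-!
If the opposite edges of a 4-cycle with vertex labels `a, b, c, d` (in cyclic order) carry
equal labels and `b ≠ d`, then `a + c = b + d`. So a Θ-graceful labeling of `G₈` is determined by
the label `c` of the cut vertex `v₃` and the signed differences `u₁, …, u₄` from `c` to the four
neighbours of `v₃`: the two remaining vertices are labelled `c + u₁ + u₂` and `c + u₃ + u₄`.
The labels sum to `0 + 1 + ⋯ + 6 = 21`, i.e. `2 ∑ uᵢ = 21 - 7c`, so `c ∈ {1, 3, 5}`.
The Θ-class labels are the `|uᵢ|`, four distinct positive integers. For `c = 3` they would all
be at most `3`. For `c = 1` every `uᵢ ≥ -1`, which forces `∑ uᵢ ≥ -1 + 2 + 3 + 4 = 8 > 7`,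
and `c = 5` is the mirror image.
-/

open Finset Function

theorem add_eq_add_of_abs_sub_eq_abs_sub {a b c d : ℤ} (h₁ : |a - b| = |c - d|)
    (h₂ : |a - d| = |b - c|) (hbd : b ≠ d) : a + c = b + d := by
  rcases abs_eq_abs.mp h₁ with h | h <;> rcases abs_eq_abs.mp h₂ with h' | h' <;> omega

theorem exists_le_abs_of_injective_abs {n : ℕ} [NeZero n] {u : Fin n → ℤ}
    (hu : Injective (|u ·|)) (h0 : ∀ i, u i ≠ 0) : ∃ i, (n : ℤ) ≤ |u i| := by
  by_contra! h
  have hmaps : Set.MapsTo (|u ·|) (univ : Finset (Fin n)) (Icc (1 : ℤ) (n - 1)) := fun i _ =>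
    mem_Icc.2 ⟨abs_pos.2 (h0 i), by linarith [h i]⟩
  have hcard := card_le_card_of_injOn _ hmaps hu.injOn
  simp only [card_univ, Fintype.card_fin, Int.card_Icc] at hcard
  have := NeZero.pos n
  omega

theorem eight_le_sum_of_neg_one_le {u : Fin 4 → ℤ} (hu : Injective (|u ·|)) (h0 : ∀ i, u i ≠ 0)
    (h : ∀ i, -1 ≤ u i) : 8 ≤ ∑ i, u i := by
  have h01 := hu.ne (by decide : (0 : Fin 4) ≠ 1)
  have h02 := hu.ne (by decide : (0 : Fin 4) ≠ 2)
  have h03 := hu.ne (by decide : (0 : Fin 4) ≠ 3)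
  have h12 := hu.ne (by decide : (1 : Fin 4) ≠ 2)
  have h13 := hu.ne (by decide : (1 : Fin 4) ≠ 3)
  have h23 := hu.ne (by decide : (2 : Fin 4) ≠ 3)
  have := h 0; have := h 1; have := h 2; have := h 3
  have := h0 0; have := h0 1; have := h0 2; have := h0 3
  simp only [Fin.sum_univ_four, abs_eq_max_neg] at *
  omega

theorem two_mul_sum_ne_of_injective_abs {c : ℤ} {u : Fin 4 → ℤ} (hc : c ∈ Set.Icc 0 6)
    (hu : Injective (|u ·|)) (h0 : ∀ i, u i ≠ 0) (hrange : ∀ i, c + u i ∈ Set.Icc 0 6) :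
    2 * ∑ i, u i ≠ 21 - 7 * c := by
  intro hsum
  obtain ⟨hc₀, hc₆⟩ := hc
  have hc_odd : c = 1 ∨ c = 3 ∨ c = 5 := by omega
  rcases hc_odd with rfl | rfl | rfl
  · have := eight_le_sum_of_neg_one_le hu h0 fun i => by linarith [(hrange i).1]
    omega
  · obtain ⟨i, hi⟩ := exists_le_abs_of_injective_abs hu h0
    have : |u i| ≤ 3 := abs_le.2 ⟨by linarith [(hrange i).1], by linarith [(hrange i).2]⟩
    omega
  · have := eight_le_sum_of_neg_one_le (u := -u) (by simpa using hu) (by simpa using h0)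
      fun i => by simp only [Pi.neg_apply]; linarith [(hrange i).2]
    simp only [Pi.neg_apply, sum_neg_distrib] at this
    omega

theorem lab_mem_Icc (f : Fin 7 → Fin 7) (i : Fin 7) : lab f i ∈ Set.Icc 0 6 :=
  ⟨Int.natCast_nonneg _, by have := (f i).is_lt; unfold lab; omega⟩

/-- The `uᵢ` above: signed labels of the edges `v₃v₂, v₃v₇, v₃v₄, v₃v₆` (with `v₃` subtracted). -/
def spokes (f : Fin 7 → Fin 7) : Fin 4 → ℤ :=
  ![lab f 1 - lab f 2, lab f 6 - lab f 2, lab f 3 - lab f 2, lab f 5 - lab f 2]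

theorem lab_add_spokes_mem_Icc (f : Fin 7 → Fin 7) (i : Fin 4) :
    lab f 2 + spokes f i ∈ Set.Icc 0 6 := by
  fin_cases i <;> simpa [spokes] using lab_mem_Icc f _

namespace G8Graceful

variable {f : Fin 7 → Fin 7}

theorem lab_injective (hf : G8Graceful f) : Injective (lab f) :=
  Nat.cast_injective.comp (Fin.val_injective.comp hf.1.1)

theorem sum_lab (hf : G8Graceful f) : ∑ i, lab f i = 21 := by
  calc ∑ i, lab f i = ∑ i, ((Equiv.ofBijective f hf.1 i : ℕ) : ℤ) := rfl
    _ = ∑ j : Fin 7, ((j : ℕ) : ℤ) := Equiv.sum_comp _ (fun j : Fin 7 => ((j : ℕ) : ℤ))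
    _ = 21 := rfl

theorem left_cycle (hf : G8Graceful f) : lab f 0 + lab f 2 = lab f 1 + lab f 6 :=
  add_eq_add_of_abs_sub_eq_abs_sub hf.2.1 hf.2.2.1 (hf.lab_injective.ne (by decide))

theorem right_cycle (hf : G8Graceful f) : lab f 2 + lab f 4 = lab f 3 + lab f 5 :=
  add_eq_add_of_abs_sub_eq_abs_sub hf.2.2.2.1 hf.2.2.2.2.1
    (hf.lab_injective.ne (by decide))

theorem two_mul_sum_spokes (hf : G8Graceful f) : 2 * ∑ i, spokes f i = 21 - 7 * lab f 2 := by
  have hsum := hf.sum_lab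
  rw [Fin.sum_univ_seven] at hsum
  simp only [Fin.sum_univ_four, spokes, Matrix.cons_val_zero, Matrix.cons_val_one, Matrix.cons_val]
  linarith [hf.left_cycle, hf.right_cycle]

theorem spokes_ne_zero (hf : G8Graceful f) (i : Fin 4) : spokes f i ≠ 0 := by
  fin_cases i <;> simpa [spokes, sub_eq_zero] using hf.lab_injective.ne (by decide)

theorem injective_abs_spokes (hf : G8Graceful f) : Injective (|spokes f ·|) := by
  obtain ⟨-, h₁, h₂, h₃, h₄, n₁, n₂, n₃, n₄, n₅, n₆⟩ := hf
  intro i j h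
  fin_cases i <;> fin_cases j <;> simp_all [spokes, abs_sub_comm]

end G8Graceful

/-- `G₈` admits no Θ-graceful labeling. -/
theorem G8_not_theta_graceful : ¬ ∃ f : Fin 7 → Fin 7, G8Graceful f := by
  rintro ⟨f, hf⟩
  exact two_mul_sum_ne_of_injective_abs (lab_mem_Icc f 2) hf.injective_abs_spokes
    hf.spokes_ne_zero (lab_add_spokes_mem_Icc f) hf.two_mul_sum_spokes
end

section
/- There is no $\Theta$-graceful labeling $f$ of $G_8$ with $f(v_3) = 6$; concretely, there is no bijection $f$ from $\{v_1,\dots,v_7\}$ onto $\{0,\dots,6\}$ with $f_3 = 6$ satisfying $|f_1-f_2| = |f_3-f_7|$, $|f_1-f_7| = |f_2-f_3|$, $|f_3-f_4| = |f_5-f_6|$, $|f_3-f_6| = |f_4-f_5|$, with the four values $|f_1-f_2|, |f_1-f_7|, |f_3-f_4|, |f_3-f_6|$ pairwise distinct. -/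
/-- There is no Θ-graceful labeling of `G₈` with `f(v₃) = 6`. -/
theorem no_graceful_f3_eq_six :
    ¬ ∃ f : Fin 7 → Fin 7, G8Graceful f ∧ f 2 = 6 := by
  rintro ⟨f, ⟨hbij, h1, h2, h3, h4, -⟩, hf2⟩
  -- the seven labels sum to 21
  have hsum : ∑ i : Fin 7, lab f i = 21 := by
    have := Fintype.sum_bijective f hbij (fun i => lab f i)
      (fun j => ((j : ℕ) : ℤ)) (fun i => rfl)
    rw [this]; decide
  have ha2 : lab f 2 = 6 := by rw [lab, hf2]; rfl
  -- labels of vertices other than v3 are ≠ 6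
  have hne : ∀ i : Fin 7, i ≠ 2 → lab f i ≠ 6 := by
    intro i hi h
    apply hi
    apply hbij.injective
    rw [hf2]
    unfold lab at h
    exact Fin.ext (by exact_mod_cast h)
  have e0 := hne 0 (by decide)
  have e1 := hne 1 (by decide)
  have e3 := hne 3 (by decide)
  have e4 := hne 4 (by decide)
  have e5 := hne 5 (by decide)
  have e6 := hne 6 (by decide)
  have hinj : ∀ i j : Fin 7, i ≠ j → lab f i ≠ lab f j := by
    intro i j hij h
    apply hij
    apply hbij.injective
    unfold lab at h
    exact Fin.ext (by exact_mod_cast h)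
  have d01 := hinj 0 1 (by decide)
  have d06 := hinj 0 6 (by decide)
  have d16 := hinj 1 6 (by decide)
  have d34 := hinj 3 4 (by decide)
  have d35 := hinj 3 5 (by decide)
  have d45 := hinj 4 5 (by decide)
  have hb : ∀ i : Fin 7, 0 ≤ lab f i ∧ lab f i ≤ 6 := by
    intro i
    have := (f i).isLt
    unfold lab
    omega
  have b0 := hb 0; have b1 := hb 1; have b3 := hb 3
  have b4 := hb 4; have b5 := hb 5; have b6 := hb 6
  rw [abs_eq_abs] at h1 h2 h3 h4
  rw [Fin.sum_univ_seven] at hsum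
  rw [ha2] at h1 h2 h3 h4 hsum
  rcases h1 with h1 | h1 <;> rcases h2 with h2 | h2 <;>
    rcases h3 with h3 | h3 <;> rcases h4 with h4 | h4 <;> omega
end

section
/- In any $\Theta$-graceful labeling $f$ of $G_8$ (should one exist), writing $f_i = f(v_i)$, the antipodal label sums in each 4-cycle are equal: $f_1 + f_3 = f_2 + f_7$ and $f_3 + f_5 = f_4 + f_6$; consequently both sums $\sigma^1 = f_1 + f_3$ and $\sigma^2 = f_3 + f_5$ lie between 3 and 9. -/
/-- In any Θ-graceful labeling of `G₈`, the antipodal label sums in each 4-cycle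
are equal, `f₁ + f₃ = f₂ + f₇` and `f₃ + f₅ = f₄ + f₆`, and both sums
`σ¹ = f₁ + f₃` and `σ² = f₃ + f₅` lie between `3` and `9`. -/
theorem antipodal_sums_of_G8 (f : Fin 7 → Fin 7) (hf : G8Graceful f) :
    lab f 0 + lab f 2 = lab f 1 + lab f 6 ∧
    lab f 2 + lab f 4 = lab f 3 + lab f 5 ∧
    3 ≤ lab f 0 + lab f 2 ∧ lab f 0 + lab f 2 ≤ 9 ∧
    3 ≤ lab f 2 + lab f 4 ∧ lab f 2 + lab f 4 ≤ 9 := by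
  obtain ⟨hbij, h1, h2, h3, h4, -, -, -, -, -, -⟩ := hf
  have ne : ∀ i j : Fin 7, i ≠ j → lab f i ≠ lab f j := by
    intro i j hij heq
    unfold lab at heq
    exact hij (hbij.injective (Fin.ext (by exact_mod_cast heq)))
  have hb : ∀ i : Fin 7, 0 ≤ lab f i ∧ lab f i ≤ 6 := by
    intro i
    unfold lab
    refine ⟨Int.ofNat_nonneg _, ?_⟩
    exact_mod_cast Nat.le_of_lt_succ (f i).isLt
  have n01 := ne 0 1 (by decide)
  have n02 := ne 0 2 (by decide)
  have n06 := ne 0 6 (by decide)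
  have n12 := ne 1 2 (by decide)
  have n16 := ne 1 6 (by decide)
  have n26 := ne 2 6 (by decide)
  have n23 := ne 2 3 (by decide)
  have n24 := ne 2 4 (by decide)
  have n25 := ne 2 5 (by decide)
  have n34 := ne 3 4 (by decide)
  have n35 := ne 3 5 (by decide)
  have n45 := ne 4 5 (by decide)
  have b0 := hb 0
  have b1 := hb 1
  have b2 := hb 2
  have b3 := hb 3
  have b4 := hb 4
  have b5 := hb 5
  have b6 := hb 6
  rcases abs_eq_abs.mp h1 with e1 | e1 <;> rcases abs_eq_abs.mp h2 with e2 | e2 <;>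
    rcases abs_eq_abs.mp h3 with e3 | e3 <;> rcases abs_eq_abs.mp h4 with e4 | e4 <;>
    omega
end
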